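/- The function F(r) = 1 - exp(-2λr) + 2λr·exp(-2λr) - 4λ²r²·E₁(2λr), where E₁(z) = ∫_z^∞ t⁻¹e^(-t) dt, is a valid cumulative distribution function on (0,∞): it is monotone nondecreasing, tends to 0 as r → 0⁺, and tends to 1 as r → ∞. -/

import Mathlib

/-! Substituting `z = 2λr` reduces everything to `λ = 1/2`, where
`F z = 1 - e⁻ᶻ + z e⁻ᶻ - z² E₁(z)` has derivative `2 (e⁻ᶻ - z E₁(z))`.
The elementary bound `z E₁(z) ≤ e⁻ᶻ` (from `1/t ≤ 1/z` on `t > z`) makes this nonnegative,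
and also squeezes `z² E₁(z)` between `0` and `z e⁻ᶻ`, which vanishes at `0` and at `∞`. -/

open Real MeasureTheory Filter

noncomputable def E1 (z : ℝ) : ℝ := ∫ t in Set.Ioi z, Real.exp (-t) / t

noncomputable def F (lam r : ℝ) : ℝ :=
  1 - Real.exp (-2 * lam * r) + 2 * lam * r * Real.exp (-2 * lam * r)
    - 4 * lam ^ 2 * r ^ 2 * E1 (2 * lam * r)

open Set Topology

theorem hasDerivAt_integral_Ioi {E : Type*} [NormedAddCommGroup E] [NormedSpace ℝ E]
    [CompleteSpace E] {f : ℝ → E} {a x : ℝ} (hf : IntegrableOn f (Ioi a)) (hax : a < x)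
    (hmeas : StronglyMeasurableAtFilter f (𝓝 x)) (hcont : ContinuousAt f x) :
    HasDerivAt (fun y => ∫ t in Ioi y, f t) (-f x) x := by
  have hsplit : (fun y => ∫ t in Ioi y, f t) =ᶠ[𝓝 x]
      fun y => (∫ t in Ioi a, f t) - ∫ t in a..y, f t := by
    filter_upwards [Ioi_mem_nhds hax] with y hay
    rw [← intervalIntegral.integral_Ioi_sub_Ioi hf (le_of_lt hay), sub_sub_cancel]
  have hint : IntervalIntegrable f volume a x :=
    (intervalIntegrable_iff_integrableOn_Ioc_of_le hax.le).2 (hf.mono_set Ioc_subset_Ioi_self)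
  simpa using ((intervalIntegral.integral_hasDerivAt_right hint hmeas hcont).const_sub _
    |>.congr_of_eventuallyEq hsplit)

section ExpIntegral

variable {z : ℝ}

theorem continuousOn_exp_neg_div : ContinuousOn (fun t : ℝ => exp (-t) / t) (Ioi 0) :=
  (continuous_exp.comp continuous_neg).continuousOn.div continuousOn_id fun _ ht => ne_of_gt ht

theorem exp_neg_div_le (hz : 0 < z) {t : ℝ} (ht : z < t) : exp (-t) / t ≤ exp (-t) / z :=
  div_le_div_of_nonneg_left (exp_pos _).le hz ht.le

theorem integrableOn_exp_neg_div (hz : 0 < z) :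
    IntegrableOn (fun t : ℝ => exp (-t) / t) (Ioi z) := by
  refine Integrable.mono' ((integrableOn_exp_neg_Ioi z).div_const z)
    ((continuousOn_exp_neg_div.mono (Ioi_subset_Ioi hz.le)).aestronglyMeasurable
      measurableSet_Ioi) ?_
  filter_upwards [ae_restrict_mem measurableSet_Ioi] with t (ht : z < t)
  rw [norm_of_nonneg (div_nonneg (exp_pos _).le (hz.trans ht).le)]
  exact exp_neg_div_le hz ht

theorem E1_nonneg (hz : 0 < z) : 0 ≤ E1 z :=
  setIntegral_nonneg measurableSet_Ioi fun t (ht : z < t) =>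
    div_nonneg (exp_pos _).le (hz.trans ht).le

theorem mul_E1_le_exp_neg (hz : 0 < z) : z * E1 z ≤ exp (-z) := by
  have h : E1 z ≤ ∫ t in Ioi z, exp (-t) / z :=
    setIntegral_mono_on (integrableOn_exp_neg_div hz) ((integrableOn_exp_neg_Ioi z).div_const z)
      measurableSet_Ioi fun t ht => exp_neg_div_le hz ht
  rw [integral_div, integral_exp_neg_Ioi, le_div_iff₀ hz] at h
  linarith

theorem hasDerivAt_E1 (hz : 0 < z) : HasDerivAt E1 (-(exp (-z) / z)) z :=
  hasDerivAt_integral_Ioi (integrableOn_exp_neg_div (half_pos hz)) (half_lt_self hz)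
    (continuousOn_exp_neg_div.stronglyMeasurableAtFilter isOpen_Ioi z hz)
    (continuousOn_exp_neg_div.continuousAt (Ioi_mem_nhds hz))

theorem sq_mul_E1_le (hz : 0 < z) : z ^ 2 * E1 z ≤ z * exp (-z) := by
  rw [sq, mul_assoc]
  exact mul_le_mul_of_nonneg_left (mul_E1_le_exp_neg hz) hz.le

theorem tendsto_sq_mul_E1_of_le_principal {l : Filter ℝ} (hl : l ≤ 𝓟 (Ioi 0))
    (h : Tendsto (fun z => z * exp (-z)) l (𝓝 0)) : Tendsto (fun z => z ^ 2 * E1 z) l (𝓝 0) := by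
  have hpos : ∀ᶠ z in l, 0 < z := hl (mem_principal_self _)
  refine squeeze_zero' ?_ ?_ h
  · filter_upwards [hpos] with z hz using mul_nonneg (sq_nonneg z) (E1_nonneg hz)
  · filter_upwards [hpos] with z hz using sq_mul_E1_le hz

end ExpIntegral

theorem F_half : F (1 / 2) = fun z => 1 - exp (-z) + z * exp (-z) - z ^ 2 * E1 z := by
  ext z
  simp only [F]
  ring_nf

theorem F_eq_F_half (lam r : ℝ) : F lam r = F (1 / 2) (2 * lam * r) := by
  rw [F_half]
  simp only [F]
  ring_nf

theorem hasDerivAt_F_half {z : ℝ} (hz : 0 < z) :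
    HasDerivAt (F (1 / 2)) (2 * (exp (-z) - z * E1 z)) z := by
  have hexp : HasDerivAt (fun z => exp (-z)) (-exp (-z)) z := by
    simpa using (hasDerivAt_neg z).exp
  rw [F_half]
  refine ((((hasDerivAt_const z 1).sub hexp).add ((hasDerivAt_id z).mul hexp)).sub
    ((hasDerivAt_pow 2 z).mul (hasDerivAt_E1 hz))).congr_deriv ?_
  simp only [id]
  field_simp
  ring

theorem monotoneOn_F_half : MonotoneOn (F (1 / 2)) (Ioi 0) := by
  refine monotoneOn_of_hasDerivWithinAt_nonneg (f' := fun z => 2 * (exp (-z) - z * E1 z))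
    (convex_Ioi 0) (fun z hz => (hasDerivAt_F_half hz).continuousAt.continuousWithinAt) ?_ ?_ <;>
    rw [interior_Ioi]
  · exact fun z hz => (hasDerivAt_F_half hz).hasDerivWithinAt
  · exact fun z hz => mul_nonneg zero_le_two (sub_nonneg.2 (mul_E1_le_exp_neg hz))

theorem tendsto_F_half_nhdsGT_zero : Tendsto (F (1 / 2)) (𝓝[>] 0) (𝓝 0) := by
  have hlin : Tendsto (fun z : ℝ => z * exp (-z)) (𝓝[>] 0) (𝓝 0) :=
    (Continuous.tendsto' (by fun_prop) 0 0 (by simp)).mono_left nhdsWithin_le_nhds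
  have hexp : Tendsto (fun z : ℝ => exp (-z)) (𝓝[>] 0) (𝓝 1) :=
    (Continuous.tendsto' (by fun_prop) 0 1 (by simp)).mono_left nhdsWithin_le_nhds
  rw [F_half]
  simpa using ((tendsto_const_nhds (x := (1 : ℝ))).sub hexp).add hlin |>.sub
    (tendsto_sq_mul_E1_of_le_principal inf_le_right hlin)

theorem tendsto_F_half_atTop : Tendsto (F (1 / 2)) atTop (𝓝 1) := by
  have hlin : Tendsto (fun z : ℝ => z * exp (-z)) atTop (𝓝 0) := by
    simpa using tendsto_pow_mul_exp_neg_atTop_nhds_zero 1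
  have hexp : Tendsto (fun z : ℝ => exp (-z)) atTop (𝓝 0) :=
    tendsto_exp_atBot.comp tendsto_neg_atTop_atBot
  have hE1 : Tendsto (fun z => z ^ 2 * E1 z) atTop (𝓝 0) :=
    tendsto_sq_mul_E1_of_le_principal (le_principal_iff.2 (Ioi_mem_atTop 0)) hlin
  rw [F_half]
  simpa using (((tendsto_const_nhds (x := (1 : ℝ))).sub hexp).add hlin).sub hE1

theorem stmt2 (lam : ℝ) (hlam : 0 < lam) :
    MonotoneOn (F lam) (Set.Ioi 0) ∧
    Tendsto (F lam) (nhdsWithin 0 (Set.Ioi 0)) (nhds 0) ∧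
    Tendsto (F lam) atTop (nhds 1) := by
  have hc : 0 < 2 * lam := by positivity
  have hF : F lam = F (1 / 2) ∘ (2 * lam * ·) := funext (F_eq_F_half lam)
  rw [hF]
  refine ⟨?_, ?_, ?_⟩
  · exact monotoneOn_F_half.comp (fun x _ y _ hxy => by gcongr) fun r (hr : 0 < r) => mul_pos hc hr
  · exact tendsto_F_half_nhdsGT_zero.comp
      (tendsto_comap.mono_left (comap_mulLeft_nhdsGT_zero hc).ge)
  · exact tendsto_F_half_atTop.comp (tendsto_id.const_mul_atTop hc)
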